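/- Let n be a natural number, X a separable, first countable, locally path-connected compact space, A = (a_j)_{j∈ℕ} a sequence whose image is dense in X, (B_j, b_j)_{j∈ℕ} a sequence of based topological spaces, Y = S(X, A, B) the shrinking point-attachment, and λ an ordinal. If b_j ∈ w_n^λ(B_j) for every j ∈ ℕ, then w_n^λ(Y) = X ∪ ⋃_{j∈ℕ} w_n^λ(B_j). -/

import Mathlib

open Set Filter Topology

noncomputable section

/-- The unit `n`-sphere in `ℝ^{n+1}`. -/
def Sph (n : ℕ) : Set (EuclideanSpace ℝ (Fin (n + 1))) := Metric.sphere 0 1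

/-- The basepoint `s₀ = (1,0,…,0)` of the `n`-sphere. -/
def sphBase (n : ℕ) : Sph n :=
  ⟨EuclideanSpace.single 0 1, by
    simp [Sph, mem_sphere_iff_norm, EuclideanSpace.norm_single]⟩

/-- A map `S^n → X` is essential if it is not (freely) homotopic to any constant map. -/
def Essential {n : ℕ} {X : Type*} [TopologicalSpace X] (f : C(Sph n, X)) : Prop :=
  ∀ x : X, ¬ f.Homotopic (ContinuousMap.const _ x)

/-- A sequence of maps `S^n → X` converges to `x ∈ X` if every neighborhood of `x`
eventually contains all of their images. -/
def ConvergesTo {n : ℕ} {X : Type*} [TopologicalSpace X] (f : ℕ → C(Sph n, X)) (x : X) : Prop :=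
  ∀ U ∈ 𝓝 x, ∀ᶠ k in atTop, ∀ s, f k s ∈ U

/-- `x` is a `π_n`-wild point of `X`. -/
def IsWildPoint (n : ℕ) {X : Type*} [TopologicalSpace X] (x : X) : Prop :=
  ∃ f : ℕ → C(Sph n, X), (∀ k, Essential (f k)) ∧ (∀ k, f k (sphBase n) = x) ∧ ConvergesTo f x

/-- `x` is a free `π_n`-wild point of `X`. -/
def IsFreeWildPoint (n : ℕ) {X : Type*} [TopologicalSpace X] (x : X) : Prop :=
  ∃ f : ℕ → C(Sph n, X), (∀ k, Essential (f k)) ∧ ConvergesTo f x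

/-- The `π_n`-wild set of a space `X`. -/
def wildSet (n : ℕ) (X : Type*) [TopologicalSpace X] : Set X := {x | IsWildPoint n x}

/-- The free `π_n`-wild set of a space `X`. -/
def freeWildSet (n : ℕ) (X : Type*) [TopologicalSpace X] : Set X := {x | IsFreeWildPoint n x}

/-- The `π_n`-wild set of a subset `S ⊆ X`, computed in the subspace topology,
regarded again as a subset of `X`. -/
def wildSub (n : ℕ) {X : Type*} [TopologicalSpace X] (S : Set X) : Set X :=
  Subtype.val '' wildSet n ↥S

def freeWildSub (n : ℕ) {X : Type*} [TopologicalSpace X] (S : Set X) : Set X :=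
  Subtype.val '' freeWildSet n ↥S

/-- The transfinitely iterated `π_n`-wild sets of `X`. -/
def iterWild (n : ℕ) (X : Type*) [TopologicalSpace X] (κ : Ordinal) : Set X :=
  Ordinal.limitRecOn (motive := fun _ => Set X) κ Set.univ (fun _ ih => wildSub n ih)
    (fun κ _ ih => ⋂ (o : Ordinal) (h : o < κ), ih o h)

/-- The transfinitely iterated free `π_n`-wild sets of `X`. -/
def iterFreeWild (n : ℕ) (X : Type*) [TopologicalSpace X] (κ : Ordinal) : Set X :=
  Ordinal.limitRecOn (motive := fun _ => Set X) κ Set.univ (fun _ ih => freeWildSub n ih)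
    (fun κ _ ih => ⋂ (o : Ordinal) (h : o < κ), ih o h)

/-- The `π_n`-wild rank of `X`: the least ordinal `κ` with `w_n^{κ+1}(X) = w_n^κ(X)`. -/
def wrk (n : ℕ) (X : Type*) [TopologicalSpace X] : Ordinal :=
  sInf {κ | iterWild n X (κ + 1) = iterWild n X κ}

/-- The free `π_n`-wild rank of `X`. -/
def fwrk (n : ℕ) (X : Type*) [TopologicalSpace X] : Ordinal :=
  sInf {κ | iterFreeWild n X (κ + 1) = iterFreeWild n X κ}

/-! ### Shrinking point-attachment spaces -/

/-- The underlying type of the shrinking point-attachment `S(X, A, B)`: the disjoint union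
of `X` and the spaces `B j`, with the basepoint `b j` of each `B j` identified with the
point `a j` of `X`. -/
def SPA (X : Type) [TopologicalSpace X] (a : ℕ → X) (B : ℕ → Type)
    [∀ j, TopologicalSpace (B j)] (b : ∀ j, B j) : Type :=
  X ⊕ (Σ j, {y : B j // y ≠ b j})

variable (X : Type) [TopologicalSpace X] (a : ℕ → X) (B : ℕ → Type)
  [∀ j, TopologicalSpace (B j)] (b : ∀ j, B j)

/-- The canonical inclusion of `X` into `S(X, A, B)`. -/
def SPA.ofBase (x : X) : SPA X a B b := Sum.inl x

open Classical in
/-- The canonical inclusion of `B j` into `S(X, A, B)` (sending `b j` to `a j`). -/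
noncomputable def SPA.incl (j : ℕ) (y : B j) : SPA X a B b :=
  if h : y = b j then Sum.inl (a j) else Sum.inr ⟨j, ⟨y, h⟩⟩

/-- The open-set predicate of the shrinking point-attachment topology: `U` is open iff its
trace on `X` is open, its trace on each `B j` is open, and whenever `x ∈ U ∩ X` and
`a_{j₁}, a_{j₂}, …` (with `j₁ < j₂ < ⋯`) converges to `x` in `X`, then `B_{jᵢ} ⊆ U` for all
but finitely many `i`. -/
def SPA.IsOpenPred (U : Set (SPA X a B b)) : Prop :=
  IsOpen (SPA.ofBase X a B b ⁻¹' U) ∧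
  (∀ j, IsOpen (SPA.incl X a B b j ⁻¹' U)) ∧
  (∀ x : X, SPA.ofBase X a B b x ∈ U →
    ∀ js : ℕ → ℕ, StrictMono js →
      Filter.Tendsto (fun i => a (js i)) Filter.atTop (𝓝 x) →
      ∀ᶠ i in Filter.atTop, ∀ y : B (js i), SPA.incl X a B b (js i) y ∈ U)

/-- The shrinking point-attachment topology on `S(X, A, B)`. -/
noncomputable instance SPA.topologicalSpace : TopologicalSpace (SPA X a B b) where
  IsOpen U := SPA.IsOpenPred X a B b U
  isOpen_univ := by
    refine ⟨isOpen_univ, fun j => isOpen_univ, fun x _ js _ _ => ?_⟩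
    exact Filter.Eventually.of_forall fun i y => Set.mem_univ _
  isOpen_inter := by
    rintro U V ⟨hU1, hU2, hU3⟩ ⟨hV1, hV2, hV3⟩
    refine ⟨?_, fun j => ?_, fun x hx js hjs hconv => ?_⟩
    · rw [Set.preimage_inter]; exact hU1.inter hV1
    · rw [Set.preimage_inter]; exact (hU2 j).inter (hV2 j)
    · filter_upwards [hU3 x hx.1 js hjs hconv, hV3 x hx.2 js hjs hconv] with i h1 h2 y
      exact ⟨h1 y, h2 y⟩
  isOpen_sUnion := by
    intro S hS
    refine ⟨?_, fun j => ?_, fun x hx js hjs hconv => ?_⟩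
    · rw [Set.preimage_sUnion]; exact isOpen_biUnion fun U hU => (hS U hU).1
    · rw [Set.preimage_sUnion]; exact isOpen_biUnion fun U hU => (hS U hU).2.1 j
    · obtain ⟨U, hUS, hxU⟩ := hx
      filter_upwards [(hS U hUS).2.2 x hxU js hjs hconv] with i h y
      exact Set.mem_sUnion.2 ⟨U, hUS, h y⟩

/-! ### Auxiliary general lemmas -/

section AuxGeneral

open ContinuousMap

variable {n : ℕ} {T T' : Type*} [TopologicalSpace T] [TopologicalSpace T']

lemma convergesTo_comp (φ : C(T, T')) {f : ℕ → C(Sph n, T)} {x : T}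
    (h : ConvergesTo f x) : ConvergesTo (fun k => φ.comp (f k)) (φ x) := by
  intro U hU
  filter_upwards [h _ (φ.continuous.continuousAt hU)] with k hk s
  exact hk s

lemma convergesTo_shift {f : ℕ → C(Sph n, T)} {x : T} (N : ℕ)
    (h : ConvergesTo f x) : ConvergesTo (fun k => f (k + N)) x := by
  intro U hU
  obtain ⟨m, hm⟩ := eventually_atTop.1 (h U hU)
  exact eventually_atTop.2 ⟨m, fun k hk => hm _ (le_trans hk (Nat.le_add_right _ _))⟩

lemma Essential.congr {f g : C(Sph n, T)} (h : Essential f) (hfg : f.Homotopic g) :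
    Essential g := fun c hc => h c (hfg.trans hc)

lemma IsWildPoint.map (i : C(T', T)) (r : C(T, T')) (hri : ∀ y, r (i y) = y)
    {z : T'} (hz : IsWildPoint n z) : IsWildPoint n (i z) := by
  obtain ⟨f, hess, hbase, hconv⟩ := hz
  refine ⟨fun k => i.comp (f k), fun k c hc => hess k (r c) ?_,
    fun k => by simp only [ContinuousMap.comp_apply, hbase k], convergesTo_comp i hconv⟩
  have h2 := (Homotopic.refl r).comp hc
  have e1 : r.comp (i.comp (f k)) = f k := ContinuousMap.ext fun s => hri _
  have e2 : r.comp (const (Sph n) c) = const (Sph n) (r c) := ContinuousMap.ext fun _ => rfl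
  rwa [e1, e2] at h2

end AuxGeneral
section AuxGeneral2

open ContinuousMap

variable {n : ℕ} {T : Type*} [TopologicalSpace T]

/-- Modifying a map at the (closed) basepoint to a point `z` whose every neighborhood
contains the old basepoint value yields a continuous map homotopic to the old one. -/
lemma rebase_aux {z : T} (h : C(Sph n, T)) (hmem : ∀ o : Set T, IsOpen o → z ∈ o → h (sphBase n) ∈ o) :
    ∃ h' : C(Sph n, T), h' (sphBase n) = z ∧ h'.Homotopic h ∧
      ∀ s, h' s = z ∨ h' s = h s := by
  classical
  have hcont : Continuous (fun s : Sph n => if s = sphBase n then z else h s) := by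
    rw [continuous_iff_continuousAt]
    intro s
    by_cases hs : s = sphBase n
    · subst hs
      intro V hV
      rw [Filter.mem_map]
      rcases mem_nhds_iff.1 (by simpa [if_pos] using hV) with ⟨O, hOV, hOopen, hzO⟩
      have hbO : h (sphBase n) ∈ O := hmem O hOopen hzO
      have hnh : (h ⁻¹' O) ∈ 𝓝 (sphBase n) := h.continuous.continuousAt (hOopen.mem_nhds hbO)
      refine Filter.mem_of_superset hnh ?_
      intro s' hs'
      by_cases hss : s' = sphBase n
      · simpa [hss] using hOV hzO
      · simpa [hss] using hOV hs'
    · have hev : (fun s' : Sph n => if s' = sphBase n then z else h s') =ᶠ[𝓝 s] h := by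
        filter_upwards [isOpen_ne.mem_nhds hs] with s' hs'
        simp [hs']
      exact (h.continuous.continuousAt).congr hev.symm
  refine ⟨⟨_, hcont⟩, by simp, ?_, fun s => by by_cases hs : s = sphBase n <;> simp [hs]⟩
  -- homotopy from the modified map to `h`
  have Hcont : Continuous (fun q : unitInterval × Sph n =>
      if q.1 = 0 ∧ q.2 = sphBase n then z else h q.2) := by
    rw [continuous_iff_continuousAt]
    rintro ⟨t, s⟩
    by_cases hq : t = 0 ∧ s = sphBase n
    · obtain ⟨ht, hs⟩ := hq; subst ht; subst hs
      intro V hV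
      rw [Filter.mem_map]
      rcases mem_nhds_iff.1 (by simpa using hV) with ⟨O, hOV, hOopen, hzO⟩
      have hbO : h (sphBase n) ∈ O := hmem O hOopen hzO
      have hpre : ((fun q : unitInterval × Sph n => h q.2) ⁻¹' O) ∈
          𝓝 ((0 : unitInterval), sphBase n) :=
        (h.continuous.comp continuous_snd).continuousAt (hOopen.mem_nhds hbO)
      refine Filter.mem_of_superset hpre ?_
      rintro ⟨t', s'⟩ hq'
      by_cases hss : t' = 0 ∧ s' = sphBase n
      · simpa [hss] using hOV hzO
      · simpa [hss] using hOV hq'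
    · have hcl : IsClosed {q : unitInterval × Sph n | q.1 = 0 ∧ q.2 = sphBase n} := by
        have heq : {q : unitInterval × Sph n | q.1 = 0 ∧ q.2 = sphBase n} =
            ({((0 : unitInterval), sphBase n)} : Set (unitInterval × Sph n)) := by
          ext q; simp [Prod.ext_iff]
        rw [heq]
        exact isClosed_singleton
      have hev : (fun q' : unitInterval × Sph n =>
          if q'.1 = 0 ∧ q'.2 = sphBase n then z else h q'.2) =ᶠ[𝓝 (t, s)]
          (fun q' : unitInterval × Sph n => h q'.2) := by
        filter_upwards [hcl.isOpen_compl.mem_nhds hq] with q' hq'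
        exact if_neg hq'
      exact ((h.continuous.comp continuous_snd).continuousAt).congr hev.symm
  refine ⟨⟨⟨_, Hcont⟩, ?_, ?_⟩⟩
  · intro s; simp
  · intro s; simp

/-- If `z` lies in the closure of `{b'}` and `b'` is wild, then `z` is wild. -/
lemma isWildPoint_of_mem_closure {z b' : T} (hcl : z ∈ closure ({b'} : Set T))
    (hw : IsWildPoint n b') : IsWildPoint n z := by
  have hmem : ∀ o : Set T, IsOpen o → z ∈ o → b' ∈ o := by
    intro o ho hzo
    rcases (mem_closure_iff.1 hcl) o ho hzo with ⟨w, hwo, hwb⟩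
    exact (show w = b' from hwb) ▸ hwo
  obtain ⟨f, hess, hbase, hconv⟩ := hw
  choose f' hf'base hf'hom hf'mem using fun k =>
    rebase_aux (f k) (fun o ho hzo => (hbase k).symm ▸ hmem o ho hzo)
  refine ⟨f', fun k => (hess k).congr (hf'hom k).symm, hf'base, ?_⟩
  intro U hU
  rcases mem_nhds_iff.1 hU with ⟨O, hOV, hOopen, hzO⟩
  have hbO : b' ∈ O := hmem O hOopen hzO
  filter_upwards [hconv O (hOopen.mem_nhds hbO)] with k hk s
  rcases hf'mem k s with h1 | h1
  · exact hOV (h1 ▸ hzO)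
  · exact hOV (h1 ▸ hk s)

end AuxGeneral2
/-! ### The pinch map on the sphere -/

section Pinch

open ContinuousMap

variable {n : ℕ}

/-- First coordinate of a point of the sphere. -/
def fc (s : Sph n) : ℝ := (s : EuclideanSpace ℝ (Fin (n + 1))) 0

lemma continuous_fc : Continuous (fc (n := n)) := by
  unfold fc; fun_prop

lemma norm_coe_sph (s : Sph n) : ‖(s : EuclideanSpace ℝ (Fin (n + 1)))‖ = 1 :=
  mem_sphere_zero_iff_norm.1 s.2

lemma abs_fc_le_one (s : Sph n) : |fc s| ≤ 1 := by
  have h1 : (inner ℝ (EuclideanSpace.single (0 : Fin (n+1)) (1:ℝ))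
      ((s : EuclideanSpace ℝ (Fin (n + 1)))) : ℝ) = fc s := by
    rw [EuclideanSpace.inner_single_left]; simp [fc]
  calc |fc s| = |(inner ℝ (EuclideanSpace.single (0 : Fin (n+1)) (1:ℝ))
        ((s : EuclideanSpace ℝ (Fin (n + 1)))) : ℝ)| := by rw [h1]
    _ ≤ ‖EuclideanSpace.single (0 : Fin (n+1)) (1:ℝ)‖ * ‖(s : EuclideanSpace ℝ (Fin (n + 1)))‖ :=
        abs_real_inner_le_norm _ _
    _ = 1 := by rw [norm_coe_sph, EuclideanSpace.norm_single]; norm_num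

/-- The auxiliary vector defining the pinch map. -/
noncomputable def pinchVec (s : Sph n) : EuclideanSpace ℝ (Fin (n + 1)) :=
  min 1 (2 * fc s) • EuclideanSpace.single (0 : Fin (n + 1)) (1 : ℝ) +
    max 0 (1 - 2 * fc s) • ((s : EuclideanSpace ℝ (Fin (n + 1)))
      - fc s • EuclideanSpace.single (0 : Fin (n + 1)) (1 : ℝ))

lemma continuous_pinchVec : Continuous (pinchVec (n := n)) := by
  apply Continuous.add
  · exact (continuous_const.min (continuous_const.mul continuous_fc)).smul continuous_const
  · exact (continuous_const.max (continuous_const.sub (continuous_const.mul continuous_fc))).smul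
      (continuous_subtype_val.sub (continuous_fc.smul continuous_const))

lemma pinchVec_apply_zero (s : Sph n) : pinchVec s 0 = min 1 (2 * fc s) := by
  simp [pinchVec, PiLp.add_apply, PiLp.smul_apply, PiLp.sub_apply,
    EuclideanSpace.single_apply, smul_eq_mul, fc]

lemma inner_pinchVec (s : Sph n) :
    (inner ℝ (pinchVec s) ((s : EuclideanSpace ℝ (Fin (n + 1)))) : ℝ) =
      min 1 (2 * fc s) * fc s + max 0 (1 - 2 * fc s) * (1 - fc s * fc s) := by
  rw [pinchVec, inner_add_left, real_inner_smul_left, real_inner_smul_left,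
    inner_sub_left, real_inner_smul_left, EuclideanSpace.inner_single_left,
    real_inner_self_eq_norm_sq, norm_coe_sph]
  simp only [map_one, one_mul, one_pow]
  rfl

lemma inner_pinchVec_nonneg (s : Sph n) :
    0 ≤ (inner ℝ (pinchVec s) ((s : EuclideanSpace ℝ (Fin (n + 1)))) : ℝ) := by
  rw [inner_pinchVec]
  have h1 := abs_fc_le_one s
  rw [abs_le] at h1
  have h2 : 0 ≤ max 0 (1 - 2 * fc s) := le_max_left _ _
  have h3 : 0 ≤ 1 - fc s * fc s := by nlinarith [h1.1, h1.2]
  have h4 : 0 ≤ min 1 (2 * fc s) * fc s := by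
    rcases le_or_gt 0 (fc s) with h | h
    · have : 0 ≤ min 1 (2 * fc s) := le_min zero_le_one (by linarith)
      exact mul_nonneg this h
    · have : min 1 (2 * fc s) = 2 * fc s := min_eq_right (by linarith)
      rw [this]; nlinarith
  nlinarith

lemma pinchVec_ne_zero (s : Sph n) : pinchVec s ≠ 0 := by
  rcases lt_trichotomy (fc s) 0 with h | h | h
  · intro hz
    have h0 : pinchVec s 0 = 0 := by rw [hz]; rfl
    rw [pinchVec_apply_zero, min_eq_right (by linarith : 2 * fc s ≤ 1)] at h0
    linarith
  · have heq : pinchVec s = (s : EuclideanSpace ℝ (Fin (n + 1))) := by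
      rw [pinchVec, h]
      norm_num
    rw [heq]
    intro hz
    have := norm_coe_sph s
    rw [hz, norm_zero] at this
    norm_num at this
  · intro hz
    have h0 : pinchVec s 0 = 0 := by rw [hz]; rfl
    rw [pinchVec_apply_zero] at h0
    have : 0 < min 1 (2 * fc s) := lt_min one_pos (by linarith)
    linarith

/-- The pinch map: collapses the cap `{fc ≥ 1/2}` to the basepoint; homotopic to the
identity. -/
lemma normalize_mem_sph (v : EuclideanSpace ℝ (Fin (n + 1))) (hv : v ≠ 0) :
    ‖v‖⁻¹ • v ∈ Sph n := by
  simp only [Sph, mem_sphere_zero_iff_norm, norm_smul, norm_inv, norm_norm]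
  exact inv_mul_cancel₀ (norm_ne_zero_iff.2 hv)

noncomputable def pinch : C(Sph n, Sph n) :=
  ⟨fun s => ⟨‖pinchVec s‖⁻¹ • pinchVec s, normalize_mem_sph _ (pinchVec_ne_zero s)⟩,
   Continuous.subtype_mk
     (((continuous_pinchVec.norm).inv₀
        (fun s => norm_ne_zero_iff.2 (pinchVec_ne_zero s))).smul continuous_pinchVec) _⟩

lemma pinch_coe (s : Sph n) :
    ((pinch s : Sph n) : EuclideanSpace ℝ (Fin (n + 1))) = ‖pinchVec s‖⁻¹ • pinchVec s := rfl

lemma pinch_eq_base {s : Sph n} (h : 1/2 ≤ fc s) : pinch s = sphBase n := by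
  have h1 : pinchVec s = EuclideanSpace.single (0 : Fin (n + 1)) (1 : ℝ) := by
    have e1 : min 1 (2 * fc s) = 1 := min_eq_left (by linarith)
    have e2 : max 0 (1 - 2 * fc s) = 0 := max_eq_left (by linarith)
    rw [pinchVec, e1, e2, one_smul, zero_smul, add_zero]
  apply Subtype.ext
  rw [pinch_coe, h1, EuclideanSpace.norm_single]
  norm_num
  rfl

lemma fc_sphBase : fc (sphBase n) = 1 := by
  show (EuclideanSpace.single (0 : Fin (n+1)) (1:ℝ)) 0 = 1
  simp [EuclideanSpace.single_apply]

lemma inner_pinch_nonneg (s : Sph n) :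
    0 ≤ (inner ℝ ((pinch s : Sph n) : EuclideanSpace ℝ (Fin (n + 1)))
        ((s : EuclideanSpace ℝ (Fin (n + 1)))) : ℝ) := by
  rw [pinch_coe, real_inner_smul_left]
  exact mul_nonneg (inv_nonneg.2 (norm_nonneg _)) (inner_pinchVec_nonneg s)

/-- The vector interpolation used in the homotopy from `pinch` to the identity. -/
noncomputable def pinchH (q : unitInterval × Sph n) : EuclideanSpace ℝ (Fin (n + 1)) :=
  (1 - (q.1 : ℝ)) • ((pinch q.2 : Sph n) : EuclideanSpace ℝ (Fin (n + 1))) +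
    (q.1 : ℝ) • ((q.2 : Sph n) : EuclideanSpace ℝ (Fin (n + 1)))

lemma continuous_pinchH : Continuous (pinchH (n := n)) := by
  apply Continuous.add
  · exact (continuous_const.sub (continuous_subtype_val.comp continuous_fst)).smul
      (continuous_subtype_val.comp (pinch.continuous.comp continuous_snd))
  · exact (continuous_subtype_val.comp continuous_fst).smul
      (continuous_subtype_val.comp continuous_snd)

lemma pinchH_ne_zero (q : unitInterval × Sph n) : pinchH q ≠ 0 := by
  by_cases h : (q.1 : ℝ) = 0
  · have heq : pinchH q = ((pinch q.2 : Sph n) : EuclideanSpace ℝ (Fin (n + 1))) := by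
      rw [pinchH, h]; norm_num
    rw [heq]
    intro hz
    have := norm_coe_sph (pinch q.2)
    rw [hz, norm_zero] at this; norm_num at this
  · have ht : 0 < (q.1 : ℝ) := lt_of_le_of_ne q.1.2.1 (Ne.symm h)
    have ht1 : (q.1 : ℝ) ≤ 1 := q.1.2.2
    intro hz
    have hip : (inner ℝ (pinchH q) ((q.2 : Sph n) : EuclideanSpace ℝ (Fin (n + 1))) : ℝ) = 0 := by
      rw [hz, inner_zero_left]
    rw [pinchH, inner_add_left, real_inner_smul_left, real_inner_smul_left,
      real_inner_self_eq_norm_sq, norm_coe_sph] at hip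
    have h1 := inner_pinch_nonneg q.2
    nlinarith

/-- The homotopy from `pinch` to the identity map. -/
noncomputable def pinchHomotopy : (pinch (n := n)).Homotopy (ContinuousMap.id _) where
  toFun := fun q => ⟨‖pinchH q‖⁻¹ • pinchH q, normalize_mem_sph _ (pinchH_ne_zero q)⟩
  continuous_toFun := Continuous.subtype_mk
    (((continuous_pinchH.norm).inv₀
      (fun q => norm_ne_zero_iff.2 (pinchH_ne_zero q))).smul continuous_pinchH) _
  map_zero_left := by
    intro s
    apply Subtype.ext
    show ‖pinchH (0, s)‖⁻¹ • pinchH (0, s) = _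
    have heq : pinchH ((0 : unitInterval), s)
        = ((pinch s : Sph n) : EuclideanSpace ℝ (Fin (n + 1))) := by
      rw [pinchH]; norm_num
    rw [heq, norm_coe_sph]
    norm_num
  map_one_left := by
    intro s
    apply Subtype.ext
    show ‖pinchH (1, s)‖⁻¹ • pinchH (1, s) = _
    have heq : pinchH ((1 : unitInterval), s)
        = ((s : Sph n) : EuclideanSpace ℝ (Fin (n + 1))) := by
      rw [pinchH]; norm_num
    rw [heq, norm_coe_sph]
    norm_num

lemma comp_pinch_homotopic {T : Type*} [TopologicalSpace T] (G : C(Sph n, T)) :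
    (G.comp pinch).Homotopic G := by
  have h1 : (pinch (n := n)).Homotopic (ContinuousMap.id _) := ⟨pinchHomotopy⟩
  simpa using (ContinuousMap.Homotopic.refl G).comp h1

end Pinch
/-! ### Whiskering a sphere map along a path -/

section Whisker

open ContinuousMap

variable {n : ℕ} {T T' : Type*} [TopologicalSpace T] [TopologicalSpace T']

/-- Whisker a sphere map `g` along a path from `g(s₀)` to `x₁`: the new map sends the cap
`{fc ≥ 1/2}` along the path and is `g ∘ pinch` elsewhere. -/
noncomputable def whisker {x₁ : T} (g : C(Sph n, T)) (p : Path (g (sphBase n)) x₁) :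
    C(Sph n, T) :=
  ⟨fun s => if fc s ≤ 1/2 then g (pinch s) else p.extend (2 * fc s - 1), by
    classical
    refine Continuous.if_le (g.continuous.comp pinch.continuous)
      (p.continuous_extend.comp ((continuous_const.mul continuous_fc).sub continuous_const)) continuous_fc continuous_const ?_
    intro s hs
    rw [pinch_eq_base (le_of_eq hs.symm), show (2 * fc s - 1 : ℝ) = 0 by rw [hs]; ring,
      Path.extend_zero]⟩

variable {x₁ : T} (g : C(Sph n, T)) (p : Path (g (sphBase n)) x₁)

lemma whisker_apply (s : Sph n) :
    whisker g p s = if fc s ≤ 1/2 then g (pinch s) else p.extend (2 * fc s - 1) := rfl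

lemma whisker_base : whisker g p (sphBase n) = x₁ := by
  have h : ¬ ((1:ℝ) ≤ 1/2) := by norm_num
  rw [whisker_apply, fc_sphBase, if_neg h, show (2 * (1:ℝ) - 1) = 1 by ring, Path.extend_one]

lemma whisker_mem (s : Sph n) : whisker g p s ∈ range g ∪ range p := by
  rw [whisker_apply]; split_ifs
  · exact Or.inl ⟨_, rfl⟩
  · refine Or.inr ?_
    rw [← Path.extend_range]
    exact ⟨_, rfl⟩

lemma comp_whisker (φ : C(T, T')) (hp : ∀ t : ℝ, φ (p.extend t) = φ (g (sphBase n))) :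
    φ.comp (whisker g p) = (φ.comp g).comp pinch := by
  ext s
  simp only [comp_apply, whisker_apply]
  split_ifs with h
  · rfl
  · rw [hp, pinch_eq_base (le_of_lt (by linarith [not_le.1 h]))]

lemma whisker_essential (φ : C(T, T')) (hp : ∀ t : ℝ, φ (p.extend t) = φ (g (sphBase n)))
    (hE : Essential (φ.comp g)) : Essential (whisker g p) := by
  intro c hc
  have h2 := (Homotopic.refl φ).comp hc
  have e2 : φ.comp (const (Sph n) c) = const (Sph n) (φ c) := ContinuousMap.ext fun _ => rfl
  rw [e2, comp_whisker g p φ hp] at h2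
  exact hE (φ c) ((comp_pinch_homotopic (φ.comp g)).symm.trans h2)

end Whisker
/-! ### Topology of the shrinking point-attachment -/

section SPATop

lemma SPA.isOpen_iff {U : Set (SPA X a B b)} :
    IsOpen U ↔ SPA.IsOpenPred X a B b U := Iff.rfl

lemma SPA.continuous_ofBase : Continuous (SPA.ofBase X a B b) :=
  continuous_def.2 fun _ hU => hU.1

lemma SPA.continuous_incl (j : ℕ) : Continuous (SPA.incl X a B b j) :=
  continuous_def.2 fun _ hU => hU.2.1 j

lemma SPA.incl_base (j : ℕ) : SPA.incl X a B b j (b j) = SPA.ofBase X a B b (a j) := by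
  simp [SPA.incl, SPA.ofBase]; rfl

lemma SPA.incl_ne {j : ℕ} {y : B j} (h : y ≠ b j) :
    SPA.incl X a B b j y = Sum.inr ⟨j, ⟨y, h⟩⟩ := by simp [SPA.incl, h]; rfl

lemma SPA.incl_injective (j : ℕ) : Function.Injective (SPA.incl X a B b j) := by
  intro y z h
  by_cases hy : y = b j <;> by_cases hz : z = b j
  · rw [hy, hz]
  · rw [hy, SPA.incl_base, SPA.incl_ne X a B b hz] at h
    cases h
  · rw [hz, SPA.incl_base, SPA.incl_ne X a B b hy] at h
    cases h
  · rw [SPA.incl_ne X a B b hy, SPA.incl_ne X a B b hz] at h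
    have h2 := Sum.inr.inj h
    have h3 : (⟨y, hy⟩ : {w : B j // w ≠ b j}) = ⟨z, hz⟩ :=
      eq_of_heq (Sigma.mk.inj_iff.1 h2).2
    exact congrArg Subtype.val h3

lemma SPA.incl_ne_ofBase {j : ℕ} {y : B j} (h : y ≠ b j) (x : X) :
    SPA.incl X a B b j y ≠ SPA.ofBase X a B b x := by
  rw [SPA.incl_ne X a B b h]
  intro h'; cases h'

/-- The canonical retraction of `S(X,A,B)` onto `B j`: identity on `B j`, everything else
goes to the basepoint `b j`. -/
noncomputable def SPA.retr (j : ℕ) : SPA X a B b → B j := fun u =>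
  match u with
  | Sum.inl _ => b j
  | Sum.inr ⟨i, z⟩ => if h : i = j then (h ▸ z.1) else b j

lemma SPA.retr_ofBase (j : ℕ) (x : X) :
    SPA.retr X a B b j (SPA.ofBase X a B b x) = b j := rfl

lemma SPA.retr_incl (j : ℕ) (y : B j) :
    SPA.retr X a B b j (SPA.incl X a B b j y) = y := by
  by_cases h : y = b j
  · simp [SPA.incl, h, SPA.retr]
  · rw [SPA.incl_ne X a B b h]
    simp [SPA.retr]

lemma SPA.retr_incl_ne {i j : ℕ} (h : i ≠ j) (y : B i) :
    SPA.retr X a B b j (SPA.incl X a B b i y) = b j := by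
  by_cases hy : y = b i
  · simp [SPA.incl, hy, SPA.retr]
  · rw [SPA.incl_ne X a B b hy]
    simp [SPA.retr, h]

lemma SPA.continuous_retr (j : ℕ) : Continuous (SPA.retr X a B b j) := by
  rw [continuous_def]
  intro V hV
  rw [SPA.isOpen_iff]
  refine ⟨?_, fun i => ?_, fun x hx js hjs _hconv => ?_⟩
  · by_cases hbV : b j ∈ V
    · have he : SPA.ofBase X a B b ⁻¹' (SPA.retr X a B b j ⁻¹' V) = Set.univ := by
        ext x; simp [SPA.retr_ofBase, hbV]
      rw [he]; exact isOpen_univ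
    · have he : SPA.ofBase X a B b ⁻¹' (SPA.retr X a B b j ⁻¹' V) = ∅ := by
        ext x; simp [SPA.retr_ofBase, hbV]
      rw [he]; exact isOpen_empty
  · by_cases hij : i = j
    · subst hij
      have he : SPA.incl X a B b i ⁻¹' (SPA.retr X a B b i ⁻¹' V) = V := by
        ext y; simp [SPA.retr_incl]
      rw [he]; exact hV
    · by_cases hbV : b j ∈ V
      · have he : SPA.incl X a B b i ⁻¹' (SPA.retr X a B b j ⁻¹' V) = Set.univ := by
          ext y; simp [SPA.retr_incl_ne X a B b hij, hbV]
        rw [he]; exact isOpen_univ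
      · have he : SPA.incl X a B b i ⁻¹' (SPA.retr X a B b j ⁻¹' V) = ∅ := by
          ext y; simp [SPA.retr_incl_ne X a B b hij, hbV]
        rw [he]; exact isOpen_empty
  · have hev : ∀ᶠ i in atTop, j < js i :=
      eventually_atTop.2 ⟨j + 1, fun i hi => lt_of_lt_of_le (Nat.lt_succ_self j)
        (le_trans hi (hjs.le_apply))⟩
    filter_upwards [hev] with i hi y
    show SPA.retr X a B b j (SPA.incl X a B b (js i) y) ∈ V
    rw [SPA.retr_incl_ne X a B b hi.ne']
    exact hx

lemma SPA.isOpen_incl_image {j : ℕ} {V : Set (B j)} (hV : IsOpen V) (hbV : b j ∉ V) :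
    IsOpen (SPA.incl X a B b j '' V) := by
  rw [SPA.isOpen_iff]
  refine ⟨?_, fun i => ?_, fun x hx js hjs hconv => ?_⟩
  · have he : SPA.ofBase X a B b ⁻¹' (SPA.incl X a B b j '' V) = ∅ := by
      ext x
      simp only [Set.mem_preimage, Set.mem_image, Set.mem_empty_iff_false, iff_false]
      rintro ⟨y, hyV, hy⟩
      have hyb : y ≠ b j := fun h => hbV (h ▸ hyV)
      exact SPA.incl_ne_ofBase X a B b hyb x hy
    rw [he]; exact isOpen_empty
  · by_cases hij : i = j
    · subst hij
      have he : SPA.incl X a B b i ⁻¹' (SPA.incl X a B b i '' V) = V := by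
        ext y
        simp only [Set.mem_preimage]
        exact ⟨fun ⟨z, hzV, hz⟩ => (SPA.incl_injective X a B b i hz) ▸ hzV,
          fun h => ⟨y, h, rfl⟩⟩
      rw [he]; exact hV
    · have he : SPA.incl X a B b i ⁻¹' (SPA.incl X a B b j '' V) = ∅ := by
        ext y
        simp only [Set.mem_preimage, Set.mem_empty_iff_false, iff_false]
        rintro ⟨z, hzV, hz⟩
        have hzb : z ≠ b j := fun h => hbV (h ▸ hzV)
        rw [SPA.incl_ne X a B b hzb] at hz
        by_cases hyb : y = b i
        · rw [hyb, SPA.incl_base] at hz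
          exact SPA.incl_ne_ofBase X a B b hzb (a i)
            ((SPA.incl_ne X a B b hzb).trans hz)
        · rw [SPA.incl_ne X a B b hyb] at hz
          have h2 := Sum.inr.inj hz
          exact hij ((Sigma.mk.inj_iff.1 h2).1).symm
      rw [he]; exact isOpen_empty
  · exfalso
    obtain ⟨y, hyV, hy⟩ := hx
    have hyb : y ≠ b j := fun h => hbV (h ▸ hyV)
    exact SPA.incl_ne_ofBase X a B b hyb x hy

/-- Every point of `S(X,A,B)` is either in the base or in one of the attached spaces. -/
lemma SPA.cases (u : SPA X a B b) :
    (∃ x, u = SPA.ofBase X a B b x) ∨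
      ∃ j y, y ≠ b j ∧ u = SPA.incl X a B b j y := by
  rcases u with x | ⟨j, y, hy⟩
  · exact Or.inl ⟨x, rfl⟩
  · exact Or.inr ⟨j, y, hy, (SPA.incl_ne X a B b hy).symm⟩

end SPATop
/-! ### Basic properties of iterated wild sets -/

section IterWildBasic

variable {n : ℕ} {Z : Type*} [TopologicalSpace Z]

lemma iterWild_zero : iterWild n Z 0 = Set.univ := by
  rw [iterWild, Ordinal.limitRecOn_zero]

lemma iterWild_succ (κ : Ordinal) :
    iterWild n Z (Order.succ κ) = wildSub n (iterWild n Z κ) := by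
  rw [iterWild, iterWild, Ordinal.limitRecOn_succ]

lemma iterWild_limit {κ : Ordinal} (h : Order.IsSuccLimit κ) :
    iterWild n Z κ = ⋂ (o : Ordinal) (_ : o < κ), iterWild n Z o := by
  rw [iterWild, Ordinal.limitRecOn_limit _ _ _ _ h]; rfl

lemma wildSub_subset {S : Set Z} : wildSub n S ⊆ S := by
  rintro z ⟨w, _, rfl⟩
  exact w.2

lemma mem_wildSub_iff {S : Set Z} {z : Z} :
    z ∈ wildSub n S ↔ ∃ hz : z ∈ S, IsWildPoint n (⟨z, hz⟩ : ↥S) := by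
  constructor
  · rintro ⟨w, hw, rfl⟩; exact ⟨w.2, hw⟩
  · rintro ⟨hz, hw⟩; exact ⟨⟨z, hz⟩, hw, rfl⟩

lemma iterWild_antitone (n : ℕ) (Z : Type*) [TopologicalSpace Z] :
    ∀ κ' κ : Ordinal, κ ≤ κ' → iterWild n Z κ' ⊆ iterWild n Z κ := by
  intro κ'
  induction κ' using Ordinal.induction with
  | h o IH =>
    intro κ hκ
    rcases eq_or_lt_of_le hκ with rfl | hlt
    · exact subset_rfl
    rcases Ordinal.zero_or_succ_or_isSuccLimit o with h0 | ⟨o', rfl⟩ | hlim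
    · exact absurd (h0 ▸ hlt) (not_lt_zero (a := κ))
    · have h1 : iterWild n Z (Order.succ o') ⊆ iterWild n Z o' := by
        rw [iterWild_succ]; exact wildSub_subset
      exact h1.trans (IH o' (Order.lt_succ o') κ (Order.lt_succ_iff.1 hlt))
    · rw [iterWild_limit hlim]
      intro z hz
      have h1 := Set.mem_iInter.1 hz κ
      exact Set.mem_iInter.1 h1 hlt

end IterWildBasic

section SPAMore

lemma SPA.incl_mem_elim {j : ℕ} {y : B j} (hy : y ≠ b j) {S : ∀ i, Set (B i)}
    (h : SPA.incl X a B b j y ∈ ⋃ i, SPA.incl X a B b i '' S i) : y ∈ S j := by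
  obtain ⟨_, ⟨i, rfl⟩, y', hy'S, heq⟩ := h
  by_cases hyb' : y' = b i
  · exfalso
    rw [hyb', SPA.incl_base] at heq
    exact SPA.incl_ne_ofBase X a B b hy (a i) (heq.symm)
  · rw [SPA.incl_ne X a B b hyb', SPA.incl_ne X a B b hy] at heq
    have h2 := Sum.inr.inj heq
    obtain ⟨hij, hyy⟩ := Sigma.mk.inj_iff.1 h2
    subst hij
    have h4 : y' = y := congrArg Subtype.val (eq_of_heq hyy)
    exact h4 ▸ hy'S

/-- Closure membership passes to subtypes. -/
lemma mem_closure_subtype {Z : Type*} [TopologicalSpace Z] {S : Set Z} {z w : Z}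
    (hz : z ∈ S) (hw : w ∈ S) (hcl : z ∈ closure ({w} : Set Z)) :
    (⟨z, hz⟩ : ↥S) ∈ closure ({⟨w, hw⟩} : Set ↥S) := by
  rw [mem_closure_iff] at hcl ⊢
  intro o ho hzo
  obtain ⟨V, hV, rfl⟩ := isOpen_induced_iff.1 ho
  obtain ⟨v, hvV, hvw⟩ := hcl V hV hzo
  have : w ∈ V := (show v = w from hvw) ▸ hvV
  exact ⟨⟨w, hw⟩, this, rfl⟩

end SPAMore

section SubtypeMaps

/-- The inclusion `W ⊆ B j → S ⊆ S(X,A,B)` as a continuous map of subspaces. -/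
def inclMap (j : ℕ) {S : Set (SPA X a B b)} {W : Set (B j)}
    (h : ∀ y ∈ W, SPA.incl X a B b j y ∈ S) : C(↥W, ↥S) :=
  ⟨fun y => ⟨SPA.incl X a B b j y.1, h y.1 y.2⟩,
   Continuous.subtype_mk ((SPA.continuous_incl X a B b j).comp continuous_subtype_val) _⟩

/-- The retraction `S ⊆ S(X,A,B) → W ⊆ B j` as a continuous map of subspaces. -/
noncomputable def retrMap (j : ℕ) {S : Set (SPA X a B b)} {W : Set (B j)}
    (h : ∀ u ∈ S, SPA.retr X a B b j u ∈ W) : C(↥S, ↥W) :=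
  ⟨fun u => ⟨SPA.retr X a B b j u.1, h u.1 u.2⟩,
   Continuous.subtype_mk ((SPA.continuous_retr X a B b j).comp continuous_subtype_val) _⟩

lemma retrMap_inclMap (j : ℕ) {S : Set (SPA X a B b)} {W : Set (B j)}
    (h1 : ∀ y ∈ W, SPA.incl X a B b j y ∈ S) (h2 : ∀ u ∈ S, SPA.retr X a B b j u ∈ W)
    (y : ↥W) : retrMap X a B b j h2 (inclMap X a B b j h1 y) = y :=
  Subtype.ext (SPA.retr_incl X a B b j y.1)

end SubtypeMaps

/-- The inclusion of the base `X` into a subset `S ⊆ S(X,A,B)` containing it. -/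
def ofBaseMap {S : Set (SPA X a B b)} (h : ∀ x : X, SPA.ofBase X a B b x ∈ S) :
    C(X, ↥S) :=
  ⟨fun x => ⟨SPA.ofBase X a B b x, h x⟩,
   Continuous.subtype_mk (SPA.continuous_ofBase X a B b) _⟩
/-! ### The X-part: every base point is wild in suitable subspaces -/

lemma xpart_wild (n : ℕ) [FirstCountableTopology X] [LocallyPathConnectedSpace X]
    (ha : DenseRange a) (S : Set (SPA X a B b)) (W : ∀ j, Set (B j))
    (hSX : ∀ x : X, SPA.ofBase X a B b x ∈ S)
    (hSincl : ∀ j, ∀ y ∈ W j, SPA.incl X a B b j y ∈ S)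
    (hretr : ∀ j, ∀ u ∈ S, SPA.retr X a B b j u ∈ W j)
    (hbW : ∀ j, b j ∈ W j)
    (hbwild : ∀ j, IsWildPoint n (⟨b j, hbW j⟩ : ↥(W j)))
    (x : X) : IsWildPoint n (⟨SPA.ofBase X a B b x, hSX x⟩ : ↥S) := by
  classical
  -- an antitone neighborhood basis at x
  obtain ⟨U, hU⟩ := (𝓝 x).exists_antitone_basis
  -- path connected open neighborhoods inside each U k
  have hVex : ∀ k : ℕ, ∃ V : Set X, (IsOpen V ∧ x ∈ V ∧ IsPathConnected V) ∧ V ⊆ U k :=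
    fun k => (isOpen_isPathConnected_basis x).mem_iff.1 (hU.1.mem_of_mem trivial)
  choose V hV hVU using hVex
  have hVopen : ∀ k, IsOpen (V k) := fun k => (hV k).1
  have hxV : ∀ k, x ∈ V k := fun k => (hV k).2.1
  have hVpc : ∀ k, IsPathConnected (V k) := fun k => (hV k).2.2
  -- choose indices with a (js k) ∈ V k
  choose js hjs using fun k => ha.exists_mem_open (hVopen k) ⟨x, hxV k⟩
  -- essential maps at each attached basepoint
  choose G hGess hGbase hGconv using fun j => hbwild j
  -- paths from a (js k) to x inside V k
  have hjoin : ∀ k, JoinedIn (V k) (a (js k)) x :=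
    fun k => (hVpc k).joinedIn _ (hjs k) _ (hxV k)
  -- the sphere maps with basepoint a (js k)
  have hgbase : ∀ k,
      ((inclMap X a B b (js k) (hSincl (js k))).comp (G (js k) k)) (sphBase n)
        = ofBaseMap X a B b hSX (a (js k)) := by
    intro k
    apply Subtype.ext
    show SPA.incl X a B b (js k) ((G (js k) k) (sphBase n)).1
        = SPA.ofBase X a B b (a (js k))
    rw [hGbase (js k) k]
    exact SPA.incl_base X a B b (js k)
  -- the whiskered maps
  refine ⟨fun k => whisker ((inclMap X a B b (js k) (hSincl (js k))).comp (G (js k) k))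
    ((((hjoin k).somePath).map (ofBaseMap X a B b hSX).continuous).cast (hgbase k) rfl),
    ?_, ?_, ?_⟩
  · -- essential
    intro k
    refine whisker_essential _ _ (retrMap X a B b (js k) (hretr (js k))) ?_ ?_
    · intro t
      set q := (((hjoin k).somePath).map (ofBaseMap X a B b hSX).continuous).cast (hgbase k) rfl
      obtain ⟨t', ht'⟩ : ∃ t', q.extend t = ofBaseMap X a B b hSX ((hjoin k).somePath t') := by
        have h1 : q.extend t ∈ range ⇑q := by
          rw [← Path.extend_range]; exact mem_range_self t
        obtain ⟨t'', ht''⟩ := h1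
        exact ⟨t'', ht''.symm⟩
      rw [ht', hgbase k]
      exact Subtype.ext rfl
    · have he : (retrMap X a B b (js k) (hretr (js k))).comp
          ((inclMap X a B b (js k) (hSincl (js k))).comp (G (js k) k)) = G (js k) k := by
        ext s
        show SPA.retr X a B b (js k)
          (SPA.incl X a B b (js k) ((G (js k) k) s).1) = ((G (js k) k) s).1
        exact SPA.retr_incl X a B b (js k) _
      rw [he]
      exact hGess (js k) k
  · -- based at x
    intro k
    exact whisker_base _ _
  · -- convergence
    intro U' hU'
    rw [nhds_subtype_eq_comap] at hU'
    obtain ⟨Uo, hUo, hsub⟩ := Filter.mem_comap.1 hU'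
    obtain ⟨O, hOsub, hOopen, hmemO⟩ := mem_nhds_iff.1 hUo
    have hpre : SPA.ofBase X a B b ⁻¹' O ∈ 𝓝 x :=
      (SPA.continuous_ofBase X a B b).continuousAt (hOopen.mem_nhds hmemO)
    obtain ⟨m₀, -, hm₀⟩ := hU.1.mem_iff.1 hpre
    -- the set of bad indices is finite
    have hBadFin : {k : ℕ | ∃ w : Sph n,
        SPA.incl X a B b (js k) ((G (js k) k) w).1 ∉ O}.Finite := by
      by_contra hInf
      replace hInf : {k : ℕ | ∃ w : Sph n,
          SPA.incl X a B b (js k) ((G (js k) k) w).1 ∉ O}.Infinite := hInf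
      by_cases hfib : ∃ j, {k | (∃ w : Sph n,
          SPA.incl X a B b (js k) ((G (js k) k) w).1 ∉ O) ∧ js k = j}.Infinite
      · obtain ⟨j, hj⟩ := hfib
        have haU : ∀ m, a j ∈ U m := by
          intro m
          obtain ⟨k, hk, hmk⟩ := hj.exists_gt m
          have h1 : a (js k) ∈ U m := (hU.antitone (le_of_lt hmk)) ((hVU k) (hjs k))
          rw [hk.2] at h1
          exact h1
        have haO : SPA.ofBase X a B b (a j) ∈ O := hm₀ (haU m₀)
        have hWnhds : ((fun y : ↥(W j) => SPA.incl X a B b j y.1) ⁻¹' O) ∈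
            𝓝 (⟨b j, hbW j⟩ : ↥(W j)) := by
          apply ((SPA.continuous_incl X a B b j).comp continuous_subtype_val).continuousAt
          show O ∈ 𝓝 (SPA.incl X a B b j (b j))
          rw [SPA.incl_base]
          exact hOopen.mem_nhds haO
        obtain ⟨M, hM⟩ := eventually_atTop.1 (hGconv j _ hWnhds)
        obtain ⟨k, hk, hMk⟩ := hj.exists_gt M
        obtain ⟨w, hw⟩ := hk.1
        have hkj := hk.2
        rw [hkj] at hw
        exact hw (hM k (le_of_lt hMk) w)
      · push_neg at hfib
        have hfin : ∀ j, {k | (∃ w : Sph n,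
            SPA.incl X a B b (js k) ((G (js k) k) w).1 ∉ O) ∧ js k = j}.Finite :=
          fun j => hfib j
        have hstep : ∀ m N : ℕ, ∃ k, (∃ w : Sph n,
            SPA.incl X a B b (js k) ((G (js k) k) w).1 ∉ O) ∧ N < k ∧ m < js k := by
          intro m N
          have hA : {k | (∃ w : Sph n,
              SPA.incl X a B b (js k) ((G (js k) k) w).1 ∉ O) ∧ js k ≤ m}.Finite := by
            refine Set.Finite.subset ((Set.finite_Iic m).biUnion
              (fun v (_ : v ∈ Set.Iic m) => hfin v)) ?_
            intro k hk
            exact Set.mem_biUnion hk.2 ⟨hk.1, rfl⟩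
          obtain ⟨k, hk⟩ := (hInf.diff ((hA.union (Set.finite_Iic N)))).nonempty
          rw [Set.mem_diff] at hk
          refine ⟨k, hk.1, ?_, ?_⟩
          · by_contra hc
            exact hk.2 (Or.inr (not_lt.1 hc))
          · by_contra hc
            exact hk.2 (Or.inl ⟨hk.1, not_lt.1 hc⟩)
        set φ : ℕ → ℕ := fun i =>
          Nat.rec (hstep 0 0).choose (fun _ prev => (hstep (js prev) prev).choose) i with hφ
        have hφsucc : ∀ i, φ (i + 1) = (hstep (js (φ i)) (φ i)).choose := fun i => rfl
        have hφBad : ∀ i, ∃ w : Sph n,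
            SPA.incl X a B b (js (φ i)) ((G (js (φ i)) (φ i)) w).1 ∉ O := by
          intro i
          cases i with
          | zero => exact (hstep 0 0).choose_spec.1
          | succ i => exact (hstep (js (φ i)) (φ i)).choose_spec.1
        have hφmono : StrictMono φ :=
          strictMono_nat_of_lt_succ (fun i => (hstep (js (φ i)) (φ i)).choose_spec.2.1)
        have hjsφmono : StrictMono (fun i => js (φ i)) :=
          strictMono_nat_of_lt_succ (fun i => (hstep (js (φ i)) (φ i)).choose_spec.2.2)
        have htend : Filter.Tendsto (fun i => a (js (φ i))) Filter.atTop (𝓝 x) := by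
          rw [hU.1.tendsto_right_iff]
          intro m _
          refine eventually_atTop.2 ⟨m, fun i hi => ?_⟩
          have h1 : a (js (φ i)) ∈ U (φ i) := (hVU (φ i)) (hjs (φ i))
          exact hU.antitone (le_trans hi (hφmono.le_apply)) h1
        have h3 := ((SPA.isOpen_iff X a B b).1 hOopen).2.2 x hmemO
          (fun i => js (φ i)) hjsφmono htend
        obtain ⟨M, hM⟩ := eventually_atTop.1 h3
        obtain ⟨w, hw⟩ := hφBad M
        exact hw (hM M le_rfl _)
    obtain ⟨Nb, hNb⟩ := hBadFin.bddAbove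
    refine eventually_atTop.2 ⟨max (Nb + 1) m₀, fun k hk s => ?_⟩
    have hkNb : Nb + 1 ≤ k := le_trans (le_max_left _ _) hk
    have hkm₀ : m₀ ≤ k := le_trans (le_max_right _ _) hk
    apply hsub
    show (whisker ((inclMap X a B b (js k) (hSincl (js k))).comp (G (js k) k))
      ((((hjoin k).somePath).map (ofBaseMap X a B b hSX).continuous).cast (hgbase k) rfl) s).1
        ∈ Uo
    apply hOsub
    rcases whisker_mem ((inclMap X a B b (js k) (hSincl (js k))).comp (G (js k) k))
      ((((hjoin k).somePath).map (ofBaseMap X a B b hSX).continuous).cast (hgbase k) rfl) s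
      with hmem | hmem
    · obtain ⟨w, hw⟩ := hmem
      have hknotbad : k ∉ {k : ℕ | ∃ w : Sph n,
          SPA.incl X a B b (js k) ((G (js k) k) w).1 ∉ O} := by
        intro hbad
        exact absurd (hNb hbad) (not_le.2 (Nat.lt_of_succ_le hkNb))
      rw [Set.mem_setOf_eq] at hknotbad
      push_neg at hknotbad
      rw [← hw]
      exact hknotbad w
    · obtain ⟨t, ht⟩ := hmem
      rw [← ht]
      show SPA.ofBase X a B b ((hjoin k).somePath t) ∈ O
      exact hm₀ (hU.antitone hkm₀ ((hVU k) ((hjoin k).somePath_mem t)))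
/-- If `X` is a separable, first countable, locally path-connected compact
space, the sequence `a` has dense image, and `b j ∈ w_n^λ(B j)` for all `j`, then
`w_n^λ(S(X,A,B)) = X ∪ ⋃_j w_n^λ(B_j)`. -/
theorem statement16 (n : ℕ) [CompactSpace X] [TopologicalSpace.SeparableSpace X]
    [FirstCountableTopology X] [LocallyPathConnectedSpace X]
    (ha : DenseRange a) (l : Ordinal)
    (hb : ∀ j, b j ∈ iterWild n (B j) l) :
    iterWild n (SPA X a B b) l =
      Set.range (SPA.ofBase X a B b) ∪ ⋃ j, SPA.incl X a B b j '' iterWild n (B j) l := by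
  suffices H : ∀ κ : Ordinal, κ ≤ l → iterWild n (SPA X a B b) κ =
      Set.range (SPA.ofBase X a B b) ∪ ⋃ j, SPA.incl X a B b j '' iterWild n (B j) κ from
    H l le_rfl
  intro κ
  induction κ using Ordinal.induction with
  | h o IH =>
  intro hol
  rcases Ordinal.zero_or_succ_or_isSuccLimit o with rfl | ⟨κ₀, rfl⟩ | hlim
  · -- zero case
    rw [iterWild_zero]
    symm
    rw [Set.eq_univ_iff_forall]
    intro u
    rcases SPA.cases X a B b u with ⟨x, rfl⟩ | ⟨j, y, hy, rfl⟩
    · exact Or.inl ⟨x, rfl⟩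
    · refine Or.inr (Set.mem_iUnion.2 ⟨j, ⟨y, ?_, rfl⟩⟩)
      rw [iterWild_zero]; exact Set.mem_univ y
  · -- successor case
    have hκ₀l : κ₀ ≤ l := le_of_lt (lt_of_lt_of_le (Order.lt_succ κ₀) hol)
    have IHκ := IH κ₀ (Order.lt_succ κ₀) hκ₀l
    have hbW : ∀ j, b j ∈ iterWild n (B j) κ₀ := fun j => iterWild_antitone n (B j) l κ₀ hκ₀l (hb j)
    have hbWsucc : ∀ j, b j ∈ wildSub n (iterWild n (B j) κ₀) := by
      intro j
      have := iterWild_antitone n (B j) l (Order.succ κ₀) hol (hb j)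
      rwa [iterWild_succ] at this
    have hSX : ∀ x : X, SPA.ofBase X a B b x ∈ iterWild n (SPA X a B b) κ₀ := by
      intro x; rw [IHκ]; exact Or.inl ⟨x, rfl⟩
    have hSincl : ∀ j, ∀ y ∈ iterWild n (B j) κ₀, SPA.incl X a B b j y ∈ iterWild n (SPA X a B b) κ₀ := by
      intro j y hy; rw [IHκ]
      exact Or.inr (Set.mem_iUnion.2 ⟨j, ⟨y, hy, rfl⟩⟩)
    have hretr : ∀ j, ∀ u ∈ iterWild n (SPA X a B b) κ₀, SPA.retr X a B b j u ∈ iterWild n (B j) κ₀ := by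
      intro j u hu
      rw [IHκ] at hu
      rcases hu with ⟨x, hx⟩ | hu2
      · rw [← hx, SPA.retr_ofBase]; exact hbW j
      · obtain ⟨_, ⟨i, rfl⟩, y, hyW, hy⟩ := hu2
        by_cases hij : i = j
        · subst hij; rw [← hy, SPA.retr_incl]; exact hyW
        · rw [← hy, SPA.retr_incl_ne X a B b hij]; exact hbW j
    -- the continuous maps between subspaces


    have hbwild : ∀ j, IsWildPoint n (⟨b j, hbW j⟩ : ↥(iterWild n (B j) κ₀)) := by
      intro j
      obtain ⟨h1, h2⟩ := mem_wildSub_iff.1 (hbWsucc j)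
      exact h2
    rw [iterWild_succ]
    have hrwB : ∀ j, iterWild n (B j) (Order.succ κ₀) = wildSub n (iterWild n (B j) κ₀) := fun j =>
      iterWild_succ κ₀
    apply Set.Subset.antisymm
    · -- ⊆ direction
      intro u hu
      obtain ⟨huS, hwild⟩ := mem_wildSub_iff.1 hu
      rcases SPA.cases X a B b u with ⟨x, rfl⟩ | ⟨j, z, hz, rfl⟩
      · exact Or.inl ⟨x, rfl⟩
      · refine Or.inr (Set.mem_iUnion.2 ⟨j, ?_⟩)
        have hzW : z ∈ iterWild n (B j) κ₀ := by
          have huS' := huS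
          rw [IHκ] at huS'
          rcases huS' with ⟨x, hx⟩ | hu2
          · exact absurd hx.symm (SPA.incl_ne_ofBase X a B b hz x)
          · exact SPA.incl_mem_elim X a B b hz hu2
        rw [hrwB j]
        refine ⟨z, ?_, rfl⟩
        rw [mem_wildSub_iff]
        refine ⟨hzW, ?_⟩
        by_cases hcl : z ∈ closure ({b j} : Set (B j))
        · -- rebasing case
          exact isWildPoint_of_mem_closure
            (mem_closure_subtype hzW (hbW j) hcl) (hbwild j)
        · -- separation case
          obtain ⟨V, hVopen, hzV, hbV⟩ : ∃ V, IsOpen V ∧ z ∈ V ∧ b j ∉ V := by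
            by_contra hcon
            push_neg at hcon
            apply hcl
            rw [mem_closure_iff]
            intro o ho hzo
            exact ⟨b j, hcon o ho hzo, rfl⟩
          obtain ⟨f, hess, hbase, hconv⟩ := hwild
          have hU : IsOpen (SPA.incl X a B b j '' V) :=
            SPA.isOpen_incl_image X a B b hVopen hbV
          have hUnhds : (Subtype.val ⁻¹' (SPA.incl X a B b j '' V) : Set ↥(iterWild n (SPA X a B b) κ₀)) ∈
              𝓝 (⟨SPA.incl X a B b j z, huS⟩ : ↥(iterWild n (SPA X a B b) κ₀)) :=
            continuous_subtype_val.continuousAt (hU.mem_nhds ⟨z, hzV, rfl⟩)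
          obtain ⟨N, hN⟩ := eventually_atTop.1 (hconv _ hUnhds)
          have himg : ∀ k (s : Sph n), k ≥ N → ∃ w ∈ V ∩ iterWild n (B j) κ₀,
              (f k s).1 = SPA.incl X a B b j w := by
            intro k s hk
            obtain ⟨w, hwV, hw⟩ := hN k hk s
            refine ⟨w, ⟨hwV, ?_⟩, hw.symm⟩
            -- w ∈ iterWild n (B j) κ₀ since incl j w ∈ iterWild n (SPA X a B b) κ₀ and w ≠ b j
            have hwb : w ≠ b j := fun h => hbV (h ▸ hwV)
            have hfS := (f k s).2
            rw [← hw, IHκ] at hfS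
            rcases hfS with ⟨x, hx⟩ | hu2
            · exact absurd hx.symm (SPA.incl_ne_ofBase X a B b hwb x)
            · exact SPA.incl_mem_elim X a B b hwb hu2
          refine ⟨fun k => (retrMap X a B b j (hretr j)).comp (f (k + N)), fun k => ?_, fun k => ?_, ?_⟩
          · -- essential
            intro c hc
            have h2 := (ContinuousMap.Homotopic.refl (inclMap X a B b j (hSincl j))).comp hc
            have heq : (inclMap X a B b j (hSincl j)).comp ((retrMap X a B b j (hretr j)).comp (f (k + N))) = f (k + N) := by
              ext s
              obtain ⟨w, hwVW, hw⟩ := himg (k + N) s (Nat.le_add_left _ _)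
              show SPA.incl X a B b j (SPA.retr X a B b j (f (k + N) s).1) = (f (k + N) s).1
              rw [hw, SPA.retr_incl]
            rw [heq] at h2
            have e2 : (inclMap X a B b j (hSincl j)).comp (ContinuousMap.const (Sph n) c)
                = ContinuousMap.const (Sph n) (inclMap X a B b j (hSincl j) c) := ContinuousMap.ext fun _ => rfl
            rw [e2] at h2
            exact hess (k + N) (inclMap X a B b j (hSincl j) c) h2
          · -- based
            apply Subtype.ext
            show SPA.retr X a B b j (f (k + N) (sphBase n)).1 = z
            rw [hbase (k + N)]
            exact SPA.retr_incl X a B b j z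
          · -- convergence
            have hcv := convergesTo_comp (retrMap X a B b j (hretr j)) (convergesTo_shift N hconv)
            have he : (retrMap X a B b j (hretr j)) (⟨SPA.incl X a B b j z, huS⟩ : ↥(iterWild n (SPA X a B b) κ₀)) = ⟨z, hzW⟩ := by
              apply Subtype.ext
              exact SPA.retr_incl X a B b j z
            rwa [he] at hcv
    · -- ⊇ direction
      intro u hu
      rcases hu with ⟨x, rfl⟩ | hu2
      · -- X-part
        rw [mem_wildSub_iff]
        exact ⟨hSX x, xpart_wild X a B b n ha _ _ hSX hSincl
          (fun j u hu => hretr j u hu) hbW hbwild x⟩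
      · -- B-part
        obtain ⟨_, ⟨j, rfl⟩, z, hzw, hz⟩ := hu2
        rw [hrwB j] at hzw
        obtain ⟨hzW, hzwild⟩ := mem_wildSub_iff.1 hzw
        rw [mem_wildSub_iff]
        have hwild2 : IsWildPoint n ((inclMap X a B b j (hSincl j)) ⟨z, hzW⟩) :=
          IsWildPoint.map (inclMap X a B b j (hSincl j)) (retrMap X a B b j (hretr j)) (retrMap_inclMap X a B b j (hSincl j) (hretr j)) hzwild
        refine ⟨hz ▸ (hSincl j z hzW), ?_⟩
        convert hwild2 using 2
        exact hz.symm
  · -- limit case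
    have IH' : ∀ o' < o, iterWild n (SPA X a B b) o' =
        Set.range (SPA.ofBase X a B b) ∪ ⋃ j, SPA.incl X a B b j '' iterWild n (B j) o' :=
      fun o' h => IH o' h (le_trans h.le hol)
    rw [iterWild_limit hlim]
    ext u
    constructor
    · intro hu
      rcases SPA.cases X a B b u with ⟨x, rfl⟩ | ⟨j, y, hy, rfl⟩
      · exact Or.inl ⟨x, rfl⟩
      · refine Or.inr (Set.mem_iUnion.2 ⟨j, ⟨y, ?_, rfl⟩⟩)
        rw [iterWild_limit hlim]
        refine Set.mem_iInter.2 fun o' => Set.mem_iInter.2 fun ho' => ?_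
        have h1 := Set.mem_iInter.1 (Set.mem_iInter.1 hu o') ho'
        rw [IH' o' ho'] at h1
        rcases h1 with ⟨x, hx⟩ | h2
        · exact absurd hx.symm (SPA.incl_ne_ofBase X a B b hy x)
        · exact SPA.incl_mem_elim X a B b hy h2
    · intro hu
      refine Set.mem_iInter.2 fun o' => Set.mem_iInter.2 fun ho' => ?_
      rw [IH' o' ho']
      rcases hu with ⟨x, rfl⟩ | hu2
      · exact Or.inl ⟨x, rfl⟩
      · obtain ⟨_, ⟨j, rfl⟩, y, hyW, hy⟩ := hu2
        exact Or.inr (Set.mem_iUnion.2 ⟨j, ⟨y,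
          iterWild_antitone n (B j) o o' (le_of_lt ho') hyW, hy⟩⟩)
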